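/- Let H = (V,E) be a proper Eulerian hypergraph with incidence matrix M_inc, let M be a V×V matrix over ZMod 2, and let ᾱ and ᾱ' be Pauli-based magic assignments of H (with k and l qubits respectively) both respecting M, i.e., for all u,v ∈ V, ᾱ(u)ᾱ(v) = (−1)^{M_{u,v}}·ᾱ(v)ᾱ(u) and ᾱ'(u)ᾱ'(v) = (−1)^{M_{u,v}}·ᾱ'(v)ᾱ'(u). Then c(ᾱ) + c(ᾱ') ∈ row(M_inc), and consequently b_{ᾱ}(H) = b_{ᾱ'}(H): Pauli-based magic assignments respecting the same Gram matrix have the same noncontextual bound. -/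

import Mathlib

open Matrix Finset

/-! ### Pauli matrices and observables -/

/-- The Pauli `X` matrix. -/
noncomputable def PX : Matrix (Fin 2) (Fin 2) ℂ := !![0, 1; 1, 0]

/-- The Pauli `Y` matrix. -/
noncomputable def PY : Matrix (Fin 2) (Fin 2) ℂ := !![0, -Complex.I; Complex.I, 0]

/-- The Pauli `Z` matrix. -/
noncomputable def PZ : Matrix (Fin 2) (Fin 2) ℂ := !![1, 0; 0, -1]

/-- The Kronecker (tensor) product of `k` 2×2 matrices, realized as a matrix indexed by
`Fin k → Fin 2` (a type of cardinality `2^k`). -/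
noncomputable def pauliTensor (k : ℕ) (P : Fin k → Matrix (Fin 2) (Fin 2) ℂ) :
    Matrix (Fin k → Fin 2) (Fin k → Fin 2) ℂ :=
  Matrix.of fun f g => ∏ i, P i (f i) (g i)

/-- A `k`-qubit Pauli observable: `ε · (P₁ ⊗ ⋯ ⊗ P_k)` with `ε ∈ {1,-1}` and each
`P_i ∈ {I, X, Y, Z}`. -/
def IsPauliObservable {k : ℕ} (A : Matrix (Fin k → Fin 2) (Fin k → Fin 2) ℂ) : Prop :=
  ∃ (ε : ℂ) (P : Fin k → Matrix (Fin 2) (Fin 2) ℂ),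
    (ε = 1 ∨ ε = -1) ∧ (∀ i, P i = 1 ∨ P i = PX ∨ P i = PY ∨ P i = PZ) ∧
    A = ε • pauliTensor k P

/-! ### Hypergraphs -/

/-- Product of the observables assigned to the vertices of a hyperedge (taken in increasing
order of the vertices; for commuting observables this is the product in any order). -/
noncomputable def edgeProd {V n : Type*} [LinearOrder V] [Fintype n] [DecidableEq n]
    (α : V → Matrix n n ℂ) (e : Finset V) : Matrix n n ℂ :=
  ((e.sort (· ≤ ·)).map α).prod

/-- A proper Eulerian hypergraph: each vertex lies in an even number of hyperedges, there are
no isolated vertices, no empty hyperedges, and all hyperedges are distinct. -/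
def ProperEulerian {V E : Type*} [DecidableEq V] [Fintype E] (edge : E → Finset V) : Prop :=
  (∀ v : V, Even (Finset.univ.filter (fun e : E => v ∈ edge e)).card) ∧
  (∀ v : V, ∃ e : E, v ∈ edge e) ∧
  (∀ e : E, (edge e).Nonempty) ∧
  Function.Injective edge

/-- A valid Gram matrix for a hypergraph. -/
def IsValidGram {V E : Type*} (edge : E → Finset V) (M : Matrix V V (ZMod 2)) : Prop :=
  M.IsSymm ∧ (∀ v, M v v = 0) ∧
  (∀ e : E, ∀ u ∈ edge e, ∀ v ∈ edge e, M u v = 0) ∧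
  (∀ e : E, ∀ v : V, ∑ u ∈ edge e, M u v = 0)

/-- The concatenated list of vertices of the hyperedges, each hyperedge's vertices listed in
increasing order, hyperedges enumerated by the list `le`. -/
def vertexList {V E : Type*} [LinearOrder V] (edge : E → Finset V) (le : List E) : List V :=
  (le.map fun e => (edge e).sort (· ≤ ·)).flatten

/-- The inversion sum `s(M) = ∑_{i<j, L_i > L_j} M_{L_i, L_j}`. -/
def inversionSum {V : Type*} [LinearOrder V] (M : Matrix V V (ZMod 2)) (L : List V) : ZMod 2 :=
  ∑ i : Fin L.length, ∑ j : Fin L.length,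
    if i < j ∧ L.get j < L.get i then M (L.get i) (L.get j) else 0

/-- A magic Gram matrix: a valid Gram matrix with inversion sum 1. -/
def MagicGram {V E : Type*} [LinearOrder V] (edge : E → Finset V) (le : List E)
    (M : Matrix V V (ZMod 2)) : Prop :=
  IsValidGram edge M ∧ inversionSum M (vertexList edge le) = 1

/-- A `k`-qubit Pauli-based magic assignment of a hypergraph. -/
def IsPauliMagicAssignment {V E : Type*} [LinearOrder V] [Fintype E] (k : ℕ)
    (edge : E → Finset V) (α : V → Matrix (Fin k → Fin 2) (Fin k → Fin 2) ℂ) : Prop :=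
  (∀ v, IsPauliObservable (α v)) ∧
  (∀ e : E, ∀ u ∈ edge e, ∀ w ∈ edge e, Commute (α u) (α w)) ∧
  (∀ e : E, edgeProd α (edge e) = 1 ∨ edgeProd α (edge e) = -1) ∧
  Odd (Nat.card {e : E // edgeProd α (edge e) = -1})

/-- A magic assignment of a hypergraph by Hermitian matrices squaring to the identity. -/
def IsMagicAssignment {V E n : Type*} [LinearOrder V] [Fintype E] [Fintype n] [DecidableEq n]
    (edge : E → Finset V) (α : V → Matrix n n ℂ) : Prop :=
  (∀ v, (α v).IsHermitian) ∧ (∀ v, α v * α v = 1) ∧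
  (∀ e : E, ∀ u ∈ edge e, ∀ w ∈ edge e, Commute (α u) (α w)) ∧
  (∀ e : E, edgeProd α (edge e) = 1 ∨ edgeProd α (edge e) = -1) ∧
  Odd (Nat.card {e : E // edgeProd α (edge e) = -1})

open scoped Classical in
/-- The sign vector `c(α) ∈ (ZMod 2)^E` of an assignment: `0` on hyperedges with product `+I`,
`1` on the others. -/
noncomputable def cvec {V E n : Type*} [LinearOrder V] [Fintype E] [Fintype n] [DecidableEq n]
    (edge : E → Finset V) (α : V → Matrix n n ℂ) : E → ZMod 2 :=
  fun e => if edgeProd α (edge e) = 1 then 0 else 1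

/-- The incidence matrix of a hypergraph. -/
def incMatrix {V E : Type*} [DecidableEq V] (edge : E → Finset V) : Matrix V E (ZMod 2) :=
  Matrix.of fun v e => if v ∈ edge e then 1 else 0

/-- Hamming weight of a vector over `ZMod 2`. -/
def hWeight {E : Type*} [Fintype E] (y : E → ZMod 2) : ℕ :=
  (Finset.univ.filter fun e => y e ≠ 0).card

/-- The symplectic product on `(ZMod 2)^{2k}` (coordinates indexed by `Fin k ⊕ Fin k`). -/
def sympl (k : ℕ) (s t : Fin k ⊕ Fin k → ZMod 2) : ZMod 2 :=
  ∑ i : Fin k, (s (Sum.inl i) * t (Sum.inr i) + s (Sum.inr i) * t (Sum.inl i))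

/-!
Squaring to `1` and the commutation rule `α u * α v = (-1) ^ M u v • (α v * α u)` let one bring
equal letters of a word together and cancel them, so the product of `α` along a word in which
every vertex occurs an even number of times is `± 1`, with a sign determined by `M` and the word
alone. A vector `z ∈ (ZMod 2)^E` with `M_inc *ᵥ z = 0` is a set of hyperedges covering every
vertex an even number of times; concatenating them gives such a word, whose product is also
`(-1) ^ (z ⬝ᵥ c(α))`. Hence `z ⬝ᵥ (c(α) + c(α')) = 0` for all such `z`, which puts
`c(α) + c(α')` in the row space. If `c(α) + c(α') = x ᵥ* M_inc`, multiplying a classical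
assignment by `(-1) ^ x` carries the objective for `c(α)` to the one for `c(α')`.
-/

lemma pauliTensor_mul (k : ℕ) (P Q : Fin k → Matrix (Fin 2) (Fin 2) ℂ) :
    pauliTensor k P * pauliTensor k Q = pauliTensor k (fun i => P i * Q i) := by
  ext f g
  simp only [pauliTensor, mul_apply, of_apply, ← prod_mul_distrib]
  exact (Fintype.prod_sum fun i t => P i (f i) t * Q i t (g i)).symm

lemma pauliTensor_one (k : ℕ) : pauliTensor k (fun _ => 1) = 1 := by
  ext f g
  by_cases h : f = g
  · simp [pauliTensor, h, one_apply]
  · obtain ⟨i, hi⟩ := Function.ne_iff.mp h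
    simp only [pauliTensor, of_apply, one_apply_ne h]
    exact prod_eq_zero (mem_univ i) (one_apply_ne hi)

lemma pauli_mul_self {P : Matrix (Fin 2) (Fin 2) ℂ} (h : P = 1 ∨ P = PX ∨ P = PY ∨ P = PZ) :
    P * P = 1 := by
  rcases h with rfl | rfl | rfl | rfl <;>
    simp [PX, PY, PZ, one_fin_two]

lemma IsPauliObservable.mul_self {k : ℕ} {A : Matrix (Fin k → Fin 2) (Fin k → Fin 2) ℂ}
    (h : IsPauliObservable A) : A * A = 1 := by
  obtain ⟨ε, P, hε, hP, rfl⟩ := h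
  rw [smul_mul_smul_comm, pauliTensor_mul, funext fun i => pauli_mul_self (hP i),
    pauliTensor_one]
  rcases hε with rfl | rfl <;> simp

section NegOnePow

variable {R : Type*} [CommRing R]

lemma neg_one_pow_val_add (s t : ZMod 2) :
    (-1 : R) ^ (s + t).val = (-1) ^ s.val * (-1) ^ t.val := by
  rw [ZMod.val_add, ← neg_one_pow_eq_pow_mod_two, pow_add]

lemma neg_one_pow_val_mul_self (s : ZMod 2) : (-1 : R) ^ s.val * (-1) ^ s.val = 1 := by
  rw [← neg_one_pow_val_add, CharTwo.add_self_eq_zero, ZMod.val_zero, pow_zero]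

lemma neg_one_pow_val_sum {ι : Type*} (S : Finset ι) (f : ι → ZMod 2) :
    (-1 : R) ^ (∑ i ∈ S, f i).val = ∏ i ∈ S, (-1 : R) ^ (f i).val := by
  induction S using Finset.cons_induction with
  | empty => simp
  | cons a s ha ih => rw [sum_cons, prod_cons, neg_one_pow_val_add, ih]

end NegOnePow

lemma neg_one_pow_val_injective {R : Type*} [Ring R] [CharZero R] :
    Function.Injective fun s : ZMod 2 => (-1 : R) ^ s.val := by
  intro s t h
  fin_cases s <;> fin_cases t <;> first | rfl | norm_num [ZMod.val] at h

theorem Matrix.exists_vecMul_eq_of_mulVec_eq_zero {K m n : Type*} [Field K] [Fintype m]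
    [Fintype n] [DecidableEq n] (A : Matrix m n K) (y : n → K)
    (h : ∀ z, A *ᵥ z = 0 → z ⬝ᵥ y = 0) : ∃ x, x ᵥ* A = y := by
  suffices y ∈ LinearMap.range A.vecMulLinear from this
  rw [← Subspace.forall_mem_dualAnnihilator_apply_eq_zero_iff]
  intro φ hφ
  obtain ⟨z, rfl⟩ := (dotProductEquiv K n).surjective φ
  refine h z (dotProduct_eq_zero _ fun x => ?_)
  have := (Submodule.mem_dualAnnihilator _).mp hφ _ (LinearMap.mem_range_self _ x)
  simp only [dotProductEquiv_apply_apply, vecMulLinear_apply] at this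
  rwa [dotProduct_comm, ← dotProduct_mulVec, dotProduct_comm] at this

lemma ZMod.dotProduct_eq_sum_support {E : Type*} [Fintype E] (z y : E → ZMod 2) :
    z ⬝ᵥ y = ∑ e ∈ univ.filter (z · ≠ 0), y e := by
  rw [sum_filter, dotProduct]
  refine sum_congr rfl fun e _ => ?_
  rcases (by decide : ∀ t : ZMod 2, t = 0 ∨ t = 1) (z e) with h | h <;> simp [h]

section Commutation

variable {V n : Type*} [Fintype n] [DecidableEq n] {M : Matrix V V (ZMod 2)}
  {α : V → Matrix n n ℂ}

lemma mul_list_prod_map (hc : ∀ u v, α u * α v = ((-1 : ℂ) ^ (M u v).val) • (α v * α u))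
    (a : V) (P : List V) :
    α a * (P.map α).prod = (-1 : ℂ) ^ (P.map (M a)).sum.val • ((P.map α).prod * α a) := by
  induction P with
  | nil => simp
  | cons b P ih =>
    simp only [List.map_cons, List.prod_cons, List.sum_cons, neg_one_pow_val_add]
    rw [← mul_assoc, hc, smul_mul_assoc, mul_assoc, ih, mul_smul_comm, smul_smul, mul_assoc]

lemma list_prod_map_cons_append_cons
    (hc : ∀ u v, α u * α v = ((-1 : ℂ) ^ (M u v).val) • (α v * α u))
    (hsq : ∀ v, α v * α v = 1) (a : V) (P Q : List V) :
    ((a :: (P ++ a :: Q)).map α).prod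
      = (-1 : ℂ) ^ (P.map (M a)).sum.val • ((P ++ Q).map α).prod := by
  simp only [List.map_cons, List.map_append, List.prod_cons, List.prod_append]
  rw [← mul_assoc, mul_list_prod_map hc, smul_mul_assoc, mul_assoc, ← mul_assoc (α a), hsq,
    one_mul]

end Commutation

theorem exists_list_prod_map_eq_smul_one {V : Type*} [DecidableEq V] (M : Matrix V V (ZMod 2))
    (L : List V) (hL : ∀ v, Even (L.count v)) :
    ∃ s : ZMod 2, ∀ {n : Type*} [Fintype n] [DecidableEq n] (α : V → Matrix n n ℂ),
      (∀ u v, α u * α v = ((-1 : ℂ) ^ (M u v).val) • (α v * α u)) →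
      (∀ v, α v * α v = 1) → (L.map α).prod = (-1 : ℂ) ^ s.val • 1 := by
  match L with
  | [] => exact ⟨0, fun _ _ _ => by simp⟩
  | a :: L' =>
    have ha : a ∈ L' := by
      have := hL a
      rw [List.count_cons_self, Nat.even_add_one, Nat.not_even_iff_odd] at this
      exact List.count_pos_iff.mp this.pos
    obtain ⟨P, Q, rfl⟩ := List.append_of_mem ha
    have hPQ : ∀ v, Even ((P ++ Q).count v) := by
      intro v
      have := hL v
      by_cases hv : v = a
      · subst hv
        simp only [List.count_cons_self, List.count_append] at this ⊢
        obtain ⟨m, hm⟩ := this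
        exact ⟨m - 1, by omega⟩
      · simpa [List.count_cons, List.count_append, Ne.symm hv] using this
    obtain ⟨s, hs⟩ := exists_list_prod_map_eq_smul_one M (P ++ Q) hPQ
    refine ⟨(P.map (M a)).sum + s, fun α hc hsq => ?_⟩
    rw [list_prod_map_cons_append_cons hc hsq, hs α hc hsq, smul_smul, neg_one_pow_val_add]
termination_by L.length
decreasing_by subst_vars; simp

section Hypergraph

universe u

variable {V E : Type*} [LinearOrder V] (edge : E → Finset V)

lemma count_vertexList (le : List E) (v : V) :
    (vertexList edge le).count v = le.countP (fun e => v ∈ edge e) := by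
  induction le with
  | nil => simp [vertexList]
  | cons e le ih =>
    simp only [vertexList, List.map_cons, List.flatten_cons, List.count_append] at ih ⊢
    rw [ih, List.countP_cons, ← Multiset.coe_count, Finset.sort_eq,
      Multiset.count_eq_of_nodup (edge e).nodup, add_comm]
    simp

variable [Fintype E]

section SignVector

variable {n : Type*} [Fintype n] [DecidableEq n] [Nonempty n] {α : V → Matrix n n ℂ}

lemma edgeProd_eq_neg_one_pow_cvec {e : E}
    (he : edgeProd α (edge e) = 1 ∨ edgeProd α (edge e) = -1) :
    edgeProd α (edge e) = (-1 : ℂ) ^ (cvec edge α e).val • 1 := by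
  have hne : (-1 : Matrix n n ℂ) ≠ 1 := by
    obtain ⟨i⟩ := ‹Nonempty n›
    intro h
    have := congrFun (congrFun h i) i
    norm_num at this
  rcases he with h | h
  · simp [cvec, h]
  · simp [cvec, h, hne, ZMod.val_one]

lemma list_prod_map_vertexList
    (hpm : ∀ e, edgeProd α (edge e) = 1 ∨ edgeProd α (edge e) = -1) (le : List E) :
    ((vertexList edge le).map α).prod = (-1 : ℂ) ^ (le.map (cvec edge α)).sum.val • 1 := by
  induction le with
  | nil => simp [vertexList]
  | cons e le ih =>
    have hcons : ((vertexList edge (e :: le)).map α).prod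
        = edgeProd α (edge e) * ((vertexList edge le).map α).prod := by
      simp [vertexList, edgeProd]
    rw [hcons, ih, edgeProd_eq_neg_one_pow_cvec edge (hpm e), smul_mul_smul_comm, one_mul,
      List.map_cons, List.sum_cons, neg_one_pow_val_add]

end SignVector

lemma even_count_vertexList_of_mulVec_eq_zero [Fintype V] {z : E → ZMod 2}
    (hz : incMatrix edge *ᵥ z = 0) (v : V) :
    Even ((vertexList edge (univ.filter (z · ≠ 0)).toList).count v) := by
  have hv := congrFun hz v
  rw [mulVec, dotProduct_comm, ZMod.dotProduct_eq_sum_support] at hv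
  simp only [incMatrix, of_apply, sum_boole, Pi.zero_apply, ZMod.natCast_eq_zero_iff_even] at hv
  rwa [count_vertexList, ← Multiset.coe_countP, Finset.coe_toList,
    Multiset.countP_eq_card_filter]

lemma exists_dotProduct_cvec_eq_of_mulVec_eq_zero [Fintype V] (M : Matrix V V (ZMod 2))
    {z : E → ZMod 2} (hz : incMatrix edge *ᵥ z = 0) :
    ∃ s : ZMod 2, ∀ {n : Type u} [Fintype n] [DecidableEq n] [Nonempty n]
      {α : V → Matrix n n ℂ}, (∀ e, edgeProd α (edge e) = 1 ∨ edgeProd α (edge e) = -1) →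
      (∀ v, α v * α v = 1) → (∀ u v, α u * α v = ((-1 : ℂ) ^ (M u v).val) • (α v * α u)) →
      z ⬝ᵥ cvec edge α = s := by
  obtain ⟨s, hs⟩ := exists_list_prod_map_eq_smul_one M _
    (even_count_vertexList_of_mulVec_eq_zero edge hz)
  refine ⟨s, fun {n} _ _ _ α hpm hsq hc => ?_⟩
  have h := (list_prod_map_vertexList edge hpm _).symm.trans (hs α hc hsq)
  rw [sum_map_toList] at h
  rw [ZMod.dotProduct_eq_sum_support]
  exact neg_one_pow_val_injective (smul_left_injective ℂ one_ne_zero h)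

theorem cvec_add_cvec_eq_vecMul_incMatrix [Fintype V] (M : Matrix V V (ZMod 2))
    {n n' : Type u} [Fintype n] [DecidableEq n] [Nonempty n] [Fintype n'] [DecidableEq n']
    [Nonempty n'] {α : V → Matrix n n ℂ} {α' : V → Matrix n' n' ℂ}
    (hpm : ∀ e, edgeProd α (edge e) = 1 ∨ edgeProd α (edge e) = -1)
    (hpm' : ∀ e, edgeProd α' (edge e) = 1 ∨ edgeProd α' (edge e) = -1)
    (hsq : ∀ v, α v * α v = 1) (hsq' : ∀ v, α' v * α' v = 1)
    (hc : ∀ u v, α u * α v = ((-1 : ℂ) ^ (M u v).val) • (α v * α u))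
    (hc' : ∀ u v, α' u * α' v = ((-1 : ℂ) ^ (M u v).val) • (α' v * α' u)) :
    ∃ x, cvec edge α + cvec edge α' = x ᵥ* incMatrix edge := by
  classical
  refine ((incMatrix edge).exists_vecMul_eq_of_mulVec_eq_zero _ fun z hz => ?_).imp
    fun _ => Eq.symm
  obtain ⟨s, hs⟩ := exists_dotProduct_cvec_eq_of_mulVec_eq_zero edge M hz
  rw [dotProduct_add, hs hpm hsq hc, hs hpm' hsq' hc', CharTwo.add_self_eq_zero]

end Hypergraph

section ClassicalValues

variable {V E : Type*} (edge : E → Finset V)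

lemma vecMul_incMatrix_apply [Fintype V] [DecidableEq V] (x : V → ZMod 2) (e : E) :
    (x ᵥ* incMatrix edge) e = ∑ v ∈ edge e, x v := by
  simp [vecMul, dotProduct, incMatrix]

variable [Fintype E]

def classicalValues (c : E → ZMod 2) : Set ℤ :=
  {x | ∃ a : V → ℤ, (∀ v, a v = 1 ∨ a v = -1) ∧
    x = ∑ e : E, (-1 : ℤ) ^ (c e).val * ∏ v ∈ edge e, a v}

variable [Fintype V] [DecidableEq V]

lemma classicalValues_subset_of_add_eq_vecMul {c c' : E → ZMod 2} {x : V → ZMod 2}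
    (hx : c + c' = x ᵥ* incMatrix edge) :
    classicalValues edge c ⊆ classicalValues edge c' := by
  rintro _ ⟨a, ha, rfl⟩
  refine ⟨fun v => (-1) ^ (x v).val * a v, fun v => ?_, sum_congr rfl fun e _ => ?_⟩
  · rcases ha v with h | h <;> rcases neg_one_pow_eq_or ℤ (x v).val with h' | h' <;> simp [h, h']
  · have hsign : (-1 : ℤ) ^ (c e).val = (-1) ^ (c' e).val * ∏ v ∈ edge e, (-1) ^ (x v).val := by
      rw [← neg_one_pow_val_sum, ← vecMul_incMatrix_apply, ← hx, Pi.add_apply,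
        neg_one_pow_val_add, mul_left_comm, neg_one_pow_val_mul_self, mul_one]
    rw [hsign, prod_mul_distrib, mul_assoc]

lemma classicalValues_eq_of_add_eq_vecMul {c c' : E → ZMod 2} {x : V → ZMod 2}
    (hx : c + c' = x ᵥ* incMatrix edge) :
    classicalValues edge c = classicalValues edge c' :=
  (classicalValues_subset_of_add_eq_vecMul edge hx).antisymm
    (classicalValues_subset_of_add_eq_vecMul edge ((add_comm c' c).trans hx))

end ClassicalValues

theorem stmt18_general {V E : Type*} [Fintype V] [LinearOrder V] [Fintype E]
    (edge : E → Finset V)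
    (k l : ℕ) (M : Matrix V V (ZMod 2))
    (α : V → Matrix (Fin k → Fin 2) (Fin k → Fin 2) ℂ)
    (α' : V → Matrix (Fin l → Fin 2) (Fin l → Fin 2) ℂ)
    (hα : IsPauliMagicAssignment k edge α) (hα' : IsPauliMagicAssignment l edge α')
    (hc : ∀ u v : V, α u * α v = ((-1 : ℂ) ^ (M u v).val) • (α v * α u))
    (hc' : ∀ u v : V, α' u * α' v = ((-1 : ℂ) ^ (M u v).val) • (α' v * α' u)) :
    (∃ x : V → ZMod 2,
        cvec edge α + cvec edge α' = Matrix.vecMul x (incMatrix edge)) ∧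
    ∀ b b' : ℤ,
      IsGreatest {x : ℤ | ∃ a : V → ℤ, (∀ v, a v = 1 ∨ a v = -1) ∧
        x = ∑ e : E, (-1 : ℤ) ^ (cvec edge α e).val * ∏ v ∈ edge e, a v} b →
      IsGreatest {x : ℤ | ∃ a : V → ℤ, (∀ v, a v = 1 ∨ a v = -1) ∧
        x = ∑ e : E, (-1 : ℤ) ^ (cvec edge α' e).val * ∏ v ∈ edge e, a v} b' →
      b = b' := by
  obtain ⟨hobs, -, hpm, -⟩ := hα
  obtain ⟨hobs', -, hpm', -⟩ := hα'
  obtain ⟨x, hx⟩ := cvec_add_cvec_eq_vecMul_incMatrix edge M hpm hpm'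
    (fun v => (hobs v).mul_self) (fun v => (hobs' v).mul_self) hc hc'
  refine ⟨⟨x, hx⟩, fun b b' hb hb' => ?_⟩
  change IsGreatest (classicalValues edge (cvec edge α)) b at hb
  rw [classicalValues_eq_of_add_eq_vecMul edge hx] at hb
  exact hb.unique hb'

/-- Two Pauli-based magic assignments of a proper Eulerian hypergraph
respecting the same Gram matrix `M` have sign vectors summing to an element of the row space of
the incidence matrix, and hence the same noncontextual bound. -/
theorem stmt18 {V E : Type*} [Fintype V] [LinearOrder V] [Fintype E]
    (edge : E → Finset V) (hH : ProperEulerian edge)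
    (k l : ℕ) (M : Matrix V V (ZMod 2))
    (α : V → Matrix (Fin k → Fin 2) (Fin k → Fin 2) ℂ)
    (α' : V → Matrix (Fin l → Fin 2) (Fin l → Fin 2) ℂ)
    (hα : IsPauliMagicAssignment k edge α) (hα' : IsPauliMagicAssignment l edge α')
    (hc : ∀ u v : V, α u * α v = ((-1 : ℂ) ^ (M u v).val) • (α v * α u))
    (hc' : ∀ u v : V, α' u * α' v = ((-1 : ℂ) ^ (M u v).val) • (α' v * α' u)) :
    (∃ x : V → ZMod 2,
        cvec edge α + cvec edge α' = Matrix.vecMul x (incMatrix edge)) ∧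
    ∀ b b' : ℤ,
      IsGreatest {x : ℤ | ∃ a : V → ℤ, (∀ v, a v = 1 ∨ a v = -1) ∧
        x = ∑ e : E, (-1 : ℤ) ^ (cvec edge α e).val * ∏ v ∈ edge e, a v} b →
      IsGreatest {x : ℤ | ∃ a : V → ℤ, (∀ v, a v = 1 ∨ a v = -1) ∧
        x = ∑ e : E, (-1 : ℤ) ^ (cvec edge α' e).val * ∏ v ∈ edge e, a v} b' →
      b = b' :=
  stmt18_general edge k l M α α' hα hα' hc hc'
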